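/- Averaging Q-learning block matrix stability: Let 0 ≤ γ < 1, δ > 0, D diagonal with entries in (0,1], B stochastic (nonnegative entries, rows summing to 1), all n×n. Let A = [[−D, γDB],[δI, −δI]] (a 2n×2n block matrix) and L = [[I,0],[0,γ^{1/2} I]]. Then LA = Ā L where Ā = [[−D, γ^{1/2} D B],[γ^{1/2} δ I, −δ I]], and Ā satisfies the strictly negative row dominating diagonal: [Ā]_{ii} + Σ_{j≠i} |[Ā]_{ij}| < 0 for every row i. -/
import Mathlib

open Matrix

/-- Averaging Q-learning block matrix stability: `L A = Ā L` and `Ā` has a strictly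
negative row dominating diagonal. -/
theorem stmt_16 (n : ℕ) (γ δ : ℝ) (hγ0 : 0 ≤ γ) (hγ1 : γ < 1) (hδ : 0 < δ)
    (D B : Matrix (Fin n) (Fin n) ℝ)
    (hDdiag : ∀ i j, i ≠ j → D i j = 0)
    (hDpos : ∀ i, 0 < D i i) (hDle : ∀ i, D i i ≤ 1)
    (hB : ∀ i j, 0 ≤ B i j) (hBrow : ∀ i, ∑ j, B i j = 1)
    (A L Abar : Matrix (Fin n ⊕ Fin n) (Fin n ⊕ Fin n) ℝ)
    (hA : A = Matrix.fromBlocks (-D) (γ • (D * B)) (δ • (1 : Matrix (Fin n) (Fin n) ℝ))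
      (-(δ • (1 : Matrix (Fin n) (Fin n) ℝ))))
    (hL : L = Matrix.fromBlocks 1 0 0 (Real.sqrt γ • (1 : Matrix (Fin n) (Fin n) ℝ)))
    (hAbar : Abar = Matrix.fromBlocks (-D) (Real.sqrt γ • (D * B))
      ((Real.sqrt γ * δ) • (1 : Matrix (Fin n) (Fin n) ℝ))
      (-(δ • (1 : Matrix (Fin n) (Fin n) ℝ)))) :
    L * A = Abar * L ∧
    ∀ i, Abar i i + ∑ j ∈ Finset.univ.erase i, |Abar i j| < 0 := by
  have hs : Real.sqrt γ * Real.sqrt γ = γ := Real.mul_self_sqrt hγ0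
  have hs0 : 0 ≤ Real.sqrt γ := Real.sqrt_nonneg γ
  have hs1 : Real.sqrt γ < 1 := by
    rw [show (1:ℝ) = Real.sqrt 1 by simp]
    exact Real.sqrt_lt_sqrt hγ0 hγ1
  constructor
  · subst hA hL hAbar
    rw [Matrix.fromBlocks_multiply, Matrix.fromBlocks_multiply]
    simp only [Matrix.smul_mul, Matrix.mul_smul, Matrix.one_mul, Matrix.mul_one,
      Matrix.zero_mul, Matrix.mul_zero, Matrix.mul_neg, Matrix.neg_mul, smul_smul,
      smul_zero, smul_neg, neg_zero, hs, add_zero, zero_add, mul_comm δ (Real.sqrt γ)]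
  · intro i
    rw [Finset.sum_erase_eq_sub (Finset.mem_univ i), Fintype.sum_sum_type]
    have hDB : ∀ i j, (D * B) i j = D i i * B i j := by
      intro i j
      rw [Matrix.mul_apply]
      exact Finset.sum_eq_single i (fun k _ hk => by rw [hDdiag i k (Ne.symm hk), zero_mul])
        (by simp)
    cases i with
    | inl i =>
      have h1 : ∑ j, |Abar (Sum.inl i) (Sum.inl j)| = D i i := by
        rw [hAbar]
        simp only [Matrix.fromBlocks_apply₁₁, Matrix.neg_apply]
        rw [Finset.sum_eq_single i (fun k _ hk => by rw [hDdiag i k (Ne.symm hk)]; simp)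
          (by simp)]
        rw [abs_neg, abs_of_pos (hDpos i)]
      have h2 : ∑ j, |Abar (Sum.inl i) (Sum.inr j)| = Real.sqrt γ * D i i := by
        rw [hAbar]
        simp only [Matrix.fromBlocks_apply₁₂, Matrix.smul_apply, smul_eq_mul]
        have : ∀ j, |Real.sqrt γ * (D * B) i j| = Real.sqrt γ * D i i * B i j := by
          intro j
          rw [hDB, ← mul_assoc, abs_of_nonneg
            (mul_nonneg (mul_nonneg hs0 (hDpos i).le) (hB i j))]
        rw [Finset.sum_congr rfl (fun j _ => this j), ← Finset.mul_sum, hBrow, mul_one]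
      have hd : Abar (Sum.inl i) (Sum.inl i) = -D i i := by rw [hAbar]; simp
      rw [h1, h2, hd, abs_neg, abs_of_pos (hDpos i)]
      have := hDpos i
      nlinarith
    | inr i =>
      have h1 : ∑ j, |Abar (Sum.inr i) (Sum.inl j)| = Real.sqrt γ * δ := by
        rw [hAbar]
        simp only [Matrix.fromBlocks_apply₂₁, Matrix.smul_apply, Matrix.one_apply,
          smul_eq_mul]
        rw [Finset.sum_eq_single i (fun k _ hk => by simp [(Ne.symm hk : ¬ i = k)])
          (by simp)]
        simp [abs_of_nonneg (by positivity : (0:ℝ) ≤ Real.sqrt γ * δ)]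
      have h2 : ∑ j, |Abar (Sum.inr i) (Sum.inr j)| = δ := by
        rw [hAbar]
        simp only [Matrix.fromBlocks_apply₂₂, Matrix.neg_apply, Matrix.smul_apply,
          Matrix.one_apply, smul_eq_mul]
        rw [Finset.sum_eq_single i (fun k _ hk => by simp [(Ne.symm hk : ¬ i = k)])
          (by simp)]
        simp [abs_of_pos hδ]
      have hd : Abar (Sum.inr i) (Sum.inr i) = -δ := by rw [hAbar]; simp
      rw [h1, h2, hd, abs_neg, abs_of_pos hδ]
      nlinarith
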